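/- arXiv:2009.13180 — 3 statements merged into one kernel-verified Lean document; each statement's English description precedes it below -/
import Mathlib

section
/- Let W be a (d+1) × (d+1) real matrix with zero diagonal, and suppose the directed graph with an edge from i to j whenever W_{ij} ≠ 0 contains a directed cycle. Then Tr(exp(W ⊙ W)) > d + 1, where ⊙ is the Hadamard (entrywise) product. -/
/-! A directed cycle of length `k` in the graph of `W` is a closed walk of positive weight in the
graph of the entrywise nonnegative matrix `A = W ⊙ W`, so `(A ^ k) i i > 0` for a vertex `i` on the
cycle and `Tr (A ^ k) > 0`. Every term `Tr (A ^ n) / n!` of the series `Tr (exp A)` is nonnegative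
and the `n = 0` term is `d + 1`, hence `Tr (exp A) ≥ d + 1 + Tr (A ^ k) / k! > d + 1`. -/

open Matrix NormedSpace
open scoped Nat

namespace Matrix

variable {n : Type*} [Fintype n] [DecidableEq n]

theorem pow_apply_pos_of_path {R : Type*} [Semiring R] [PartialOrder R] [IsStrictOrderedRing R]
    {A : Matrix n n R} (hA : ∀ i j, 0 ≤ A i j) {k : ℕ} (f : Fin (k + 1) → n)
    (hf : ∀ i : Fin k, 0 < A (f i.castSucc) (f i.succ)) :
    0 < (A ^ k) (f 0) (f (Fin.last k)) := by
  induction k with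
  | zero => simp
  | succ k ih =>
    have hinit : 0 < (A ^ k) (f 0) (f (Fin.last k).castSucc) := by
      simpa [Fin.init] using ih (Fin.init f) fun i => by simpa [Fin.init] using hf i.castSucc
    rw [pow_succ, mul_apply]
    exact Finset.sum_pos' (fun j _ => mul_nonneg (pow_apply_nonneg hA k _ _) (hA _ _))
      ⟨_, Finset.mem_univ _, mul_pos hinit (hf (Fin.last k))⟩

theorem trace_pow_pos_of_cycle {R : Type*} [Semiring R] [PartialOrder R] [IsStrictOrderedRing R]
    {A : Matrix n n R} (hA : ∀ i j, 0 ≤ A i j) {k : ℕ} (f : Fin (k + 1) → n)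
    (hclosed : f 0 = f (Fin.last k)) (hf : ∀ i : Fin k, 0 < A (f i.castSucc) (f i.succ)) :
    0 < trace (A ^ k) := by
  have hloop := pow_apply_pos_of_path hA f hf
  rw [← hclosed] at hloop
  exact Finset.sum_pos' (fun i _ => pow_apply_nonneg hA k i i) ⟨f 0, Finset.mem_univ _, hloop⟩

section exp

attribute [local instance] Matrix.linftyOpNormedRing Matrix.linftyOpNormedAlgebra

theorem hasSum_trace_exp {𝕂 : Type*} [RCLike 𝕂] (A : Matrix n n 𝕂) :
    HasSum (fun k => (k !⁻¹ : 𝕂) * trace (A ^ k)) (trace (exp A)) := by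
  have h := (exp_series_hasSum_exp' (𝕂 := 𝕂) A).map (traceAddMonoidHom n 𝕂)
    continuous_id.matrix_trace
  simp only [Function.comp_def, traceAddMonoidHom_apply, trace_smul, smul_eq_mul] at h
  exact h

end exp

theorem card_lt_trace_exp {A : Matrix n n ℝ} (hA : ∀ i j, 0 ≤ A i j) {k : ℕ} (hk : k ≠ 0)
    (hpos : 0 < trace (A ^ k)) : (Fintype.card n : ℝ) < trace (exp A) := by
  have hterm_nonneg (m : ℕ) : 0 ≤ (m !⁻¹ : ℝ) * trace (A ^ m) :=
    mul_nonneg (by positivity) (Finset.sum_nonneg fun i _ => pow_apply_nonneg hA m i i)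
  calc (Fintype.card n : ℝ)
      < (0 !⁻¹ : ℝ) * trace (A ^ 0) + (k !⁻¹ : ℝ) * trace (A ^ k) := by
        have : 0 < (k !⁻¹ : ℝ) * trace (A ^ k) := mul_pos (by positivity) hpos
        simp only [Nat.factorial_zero, Nat.cast_one, inv_one, one_mul, pow_zero, trace_one]
        linarith
    _ = ∑ m ∈ {0, k}, (m !⁻¹ : ℝ) * trace (A ^ m) :=
        (Finset.sum_pair (f := fun m => (m !⁻¹ : ℝ) * trace (A ^ m)) hk.symm).symm
    _ ≤ trace (exp A) := sum_le_hasSum _ (fun m _ => hterm_nonneg m) (hasSum_trace_exp A)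

end Matrix

theorem stmt11_general (d : ℕ) (W : Matrix (Fin (d + 1)) (Fin (d + 1)) ℝ)
    (hcycle : ∃ k : ℕ, 1 ≤ k ∧ ∃ f : Fin (k + 1) → Fin (d + 1),
      f 0 = f (Fin.last k) ∧ ∀ i : Fin k, W (f i.castSucc) (f i.succ) ≠ 0) :
    ((d : ℝ) + 1) < (exp (Matrix.hadamard W W)).trace := by
  obtain ⟨k, hk, f, hclosed, hedge⟩ := hcycle
  have hA : ∀ i j, 0 ≤ (W ⊙ W) i j := fun i j => mul_self_nonneg (W i j)
  have hpos : 0 < trace ((W ⊙ W) ^ k) :=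
    trace_pow_pos_of_cycle hA f hclosed fun i => mul_self_pos.mpr (hedge i)
  simpa using card_lt_trace_exp hA (by omega) hpos

theorem stmt11 (d : ℕ) (W : Matrix (Fin (d + 1)) (Fin (d + 1)) ℝ)
    (hdiag : ∀ i, W i i = 0)
    (hcycle : ∃ k : ℕ, 1 ≤ k ∧ ∃ f : Fin (k + 1) → Fin (d + 1),
      f 0 = f (Fin.last k) ∧ ∀ i : Fin k, W (f i.castSucc) (f i.succ) ≠ 0) :
    ((d : ℝ) + 1) < (exp (Matrix.hadamard W W)).trace :=
  stmt11_general d W hcycle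
end

section
/- Let W be a (d+1) × (d+1) real matrix such that the directed graph with an edge from i to j whenever W_{ij} ≠ 0 is acyclic. Then Tr(exp(W ⊙ W)) = d + 1. -/
/-! A nonzero entry of `A ^ n` forces a walk of length `n` through nonzero entries of `A`. On
`d + 1` vertices a walk of length `d + 1` repeats a vertex, so acyclicity of the support of `W`
(which is also the support of `W ⊙ W`) makes `W ⊙ W` nilpotent. Every positive power of a
nilpotent real matrix has zero trace, so only the `n = 0` term `Tr I = d + 1` of the exponential
series survives. -/

open Matrix NormedSpace

def HasCycle {ι : Type*} (r : ι → ι → Prop) : Prop :=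
  ∃ k : ℕ, 1 ≤ k ∧ ∃ f : Fin (k + 1) → ι,
    f 0 = f (Fin.last k) ∧ ∀ i : Fin k, r (f i.castSucc) (f i.succ)

section Cycles

variable {ι : Type*} {r : ι → ι → Prop}

theorem HasCycle.mono {s : ι → ι → Prop} (hrs : ∀ i j, r i j → s i j) (h : HasCycle r) :
    HasCycle s :=
  let ⟨k, hk, f, hf0, hf⟩ := h
  ⟨k, hk, f, hf0, fun i => hrs _ _ (hf i)⟩

theorem hasCycle_of_walk_of_eq {f : ℕ → ι} {a b : ℕ} (hab : a < b) (hcycle : f a = f b)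
    (hf : ∀ m, a ≤ m → m < b → r (f m) (f (m + 1))) : HasCycle r := by
  refine ⟨b - a, by omega, fun i => f (a + i), ?_, fun i => ?_⟩
  · simpa [Nat.add_sub_cancel' hab.le] using hcycle
  · simpa [Nat.add_assoc] using hf (a + i) (by omega) (by omega)

theorem hasCycle_of_walk_of_card_le [Fintype ι] {f : ℕ → ι} {n : ℕ} (hn : Fintype.card ι ≤ n)
    (hf : ∀ m < n, r (f m) (f (m + 1))) : HasCycle r := by
  obtain ⟨a, b, hne, heq⟩ := Fintype.exists_ne_map_eq_of_card_lt (fun m : Fin (n + 1) => f m)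
    (by simpa using Nat.lt_succ_of_le hn)
  rcases Fin.val_ne_of_ne hne |>.lt_or_gt with hab | hab
  · exact hasCycle_of_walk_of_eq hab heq fun m _ hm => hf m (by omega)
  · exact hasCycle_of_walk_of_eq hab heq.symm fun m _ hm => hf m (by omega)

end Cycles

section Support

variable {ι R : Type*} [Fintype ι] [DecidableEq ι]

theorem Matrix.exists_walk_of_pow_apply_ne_zero [Semiring R] (A : Matrix ι ι R) (n : ℕ)
    {i j : ι} (h : (A ^ n) i j ≠ 0) :
    ∃ f : ℕ → ι, f 0 = i ∧ f n = j ∧ ∀ m < n, A (f m) (f (m + 1)) ≠ 0 := by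
  induction n generalizing j with
  | zero =>
    obtain rfl : i = j := by
      by_contra hij
      simp [one_apply_ne hij] at h
    exact ⟨fun _ => i, rfl, rfl, by simp⟩
  | succ n ih =>
    rw [pow_succ, mul_apply] at h
    obtain ⟨k, -, hk⟩ := Finset.exists_ne_zero_of_sum_ne_zero h
    obtain ⟨f, hf0, hfn, hf⟩ := ih (left_ne_zero_of_mul hk)
    refine ⟨fun m => if m ≤ n then f m else j, by simp [hf0], by simp, fun m hm => ?_⟩
    rcases Nat.lt_succ_iff_lt_or_eq.mp hm with hm | rfl
    · simpa [hm.le, Nat.succ_le_of_lt hm] using hf m hm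
    · simpa [hfn] using right_ne_zero_of_mul hk

theorem Matrix.pow_card_eq_zero_of_not_hasCycle [Semiring R] {A : Matrix ι ι R}
    (hA : ¬ HasCycle fun i j => A i j ≠ 0) : A ^ Fintype.card ι = 0 := by
  ext i j
  by_contra h
  obtain ⟨f, -, -, hf⟩ := A.exists_walk_of_pow_apply_ne_zero _ h
  exact hA (hasCycle_of_walk_of_card_le le_rfl hf)

theorem Matrix.trace_exp_of_isNilpotent [CommRing R] [IsReduced R] [Algebra ℚ R]
    [TopologicalSpace R] [IsTopologicalRing R] {A : Matrix ι ι R} (hA : IsNilpotent A) :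
    (exp A).trace = Fintype.card ι := by
  obtain ⟨N, hN⟩ := hA
  have hexp : exp A = ∑ n ∈ Finset.range (N + 1), (n.factorial⁻¹ : ℚ) • A ^ n := by
    rw [exp_eq_tsum_rat]
    refine tsum_eq_sum fun n hn => ?_
    rw [pow_eq_zero_of_le (by simp at hn; omega) hN, smul_zero]
  have htrace_pow : ∀ n, (A ^ (n + 1)).trace = 0 := fun n =>
    (isNilpotent_trace_of_isNilpotent (IsNilpotent.pow_succ n ⟨N, hN⟩)).eq_zero
  simp [hexp, trace_sum, Finset.sum_range_succ', htrace_pow]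

end Support

theorem stmt12 (d : ℕ) (W : Matrix (Fin (d + 1)) (Fin (d + 1)) ℝ)
    (hacyclic : ¬ ∃ k : ℕ, 1 ≤ k ∧ ∃ f : Fin (k + 1) → Fin (d + 1),
      f 0 = f (Fin.last k) ∧ ∀ i : Fin k, W (f i.castSucc) (f i.succ) ≠ 0) :
    (exp (Matrix.hadamard W W)).trace = (d : ℝ) + 1 := by
  have hsupport : ¬ HasCycle fun i j => hadamard W W i j ≠ 0 :=
    fun h => hacyclic (h.mono fun _ _ => right_ne_zero_of_mul)
  rw [trace_exp_of_isNilpotent ⟨_, pow_card_eq_zero_of_not_hasCycle hsupport⟩, Fintype.card_fin,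
    Nat.cast_succ]
end

section
/- Let f(x) = φ(x W_1) W_2 where φ is coordinatewise ReLU and W_1, W_2 are weight matrices, and let f'(x) = φ(x (W_1 + U_1)) (W_2 + U_2) be the perturbed network. Then for any input x with ||x||_2 ≤ B, ||f(x) − f'(x)||_2 ≤ B (||U_1||_2 (||W_2||_2 + ||U_2||_2) + ||W_1||_2 ||U_2||_2), where ||·||_2 on matrices denotes the spectral norm. -/
open scoped Matrix.Norms.L2Operator

/-- A two-layer ReLU network `x ↦ φ(x W₁) W₂` (with coordinatewise ReLU `φ`). -/
noncomputable def net2 {n p q : ℕ} (W1 : Matrix (Fin n) (Fin p) ℝ)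
    (W2 : Matrix (Fin p) (Fin q) ℝ) (x : EuclideanSpace ℝ (Fin n)) :
    EuclideanSpace ℝ (Fin q) :=
  WithLp.toLp 2 (Matrix.vecMul (fun i => max (Matrix.vecMul (fun j => x j) W1 i) 0) W2)

/-!
Each layer `v ↦ v W` is a bounded linear map of operator norm `‖W‖`, and ReLU is 1-Lipschitz
and fixes `0`. Writing `y, y'` for the hidden activations of the two networks,
`y W₂ - y' (W₂ + U₂) = (y - y') (W₂ + U₂) - y U₂`, with `‖y - y'‖ ≤ ‖x U₁‖` and `‖y‖ ≤ ‖x W₁‖`.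
-/

theorem norm_sub_perturbed_comp_le {𝕜 E F F' G : Type*} [NontriviallyNormedField 𝕜]
    [SeminormedAddCommGroup E] [SeminormedAddCommGroup F] [SeminormedAddCommGroup F']
    [SeminormedAddCommGroup G] [NormedSpace 𝕜 E] [NormedSpace 𝕜 F] [NormedSpace 𝕜 F']
    [NormedSpace 𝕜 G] {σ : F → F'} (hσ : LipschitzWith 1 σ) (hσ₀ : σ 0 = 0)
    (A₁ Δ₁ : E →L[𝕜] F) (A₂ Δ₂ : F' →L[𝕜] G) (x : E) :
    ‖A₂ (σ (A₁ x)) - (A₂ + Δ₂) (σ ((A₁ + Δ₁) x))‖ ≤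
      ‖x‖ * (‖Δ₁‖ * (‖A₂‖ + ‖Δ₂‖) + ‖A₁‖ * ‖Δ₂‖) := by
  set y := σ (A₁ x)
  set y' := σ ((A₁ + Δ₁) x)
  have hy : ‖y‖ ≤ ‖A₁‖ * ‖x‖ :=
    calc ‖y‖ = ‖σ (A₁ x) - σ 0‖ := by rw [hσ₀, sub_zero]
      _ ≤ ‖A₁ x‖ := by
          simpa only [NNReal.coe_one, one_mul, sub_zero] using hσ.norm_sub_le (A₁ x) 0
      _ ≤ ‖A₁‖ * ‖x‖ := A₁.le_opNorm x
  have hyy' : ‖y - y'‖ ≤ ‖Δ₁‖ * ‖x‖ :=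
    calc ‖y - y'‖ ≤ ‖A₁ x - (A₁ + Δ₁) x‖ := by
          simpa only [NNReal.coe_one, one_mul] using hσ.norm_sub_le (A₁ x) ((A₁ + Δ₁) x)
      _ = ‖Δ₁ x‖ := by rw [add_apply, sub_add_cancel_left, norm_neg]
      _ ≤ ‖Δ₁‖ * ‖x‖ := Δ₁.le_opNorm x
  have hsplit : A₂ y - (A₂ + Δ₂) y' = (A₂ + Δ₂) (y - y') - Δ₂ y := by
    simp only [add_apply, map_sub]
    abel
  calc ‖A₂ y - (A₂ + Δ₂) y'‖
      ≤ ‖A₂ + Δ₂‖ * ‖y - y'‖ + ‖Δ₂‖ * ‖y‖ := by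
        rw [hsplit]
        exact (norm_sub_le _ _).trans (add_le_add ((A₂ + Δ₂).le_opNorm _) (Δ₂.le_opNorm _))
    _ ≤ (‖A₂‖ + ‖Δ₂‖) * (‖Δ₁‖ * ‖x‖) + ‖Δ₂‖ * (‖A₁‖ * ‖x‖) := by
        gcongr
        exact norm_add_le _ _
    _ = ‖x‖ * (‖Δ₁‖ * (‖A₂‖ + ‖Δ₂‖) + ‖A₁‖ * ‖Δ₂‖) := by ring

namespace EuclideanSpace

variable {ι : Type*}

def relu (v : EuclideanSpace ℝ ι) : EuclideanSpace ℝ ι :=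
  WithLp.toLp 2 fun i => max (v i) 0

theorem relu_zero : relu (0 : EuclideanSpace ℝ ι) = 0 := by
  ext i
  simp [relu]

theorem lipschitzWith_relu [Fintype ι] : LipschitzWith 1 (relu : EuclideanSpace ℝ ι → _) := by
  refine LipschitzWith.of_dist_le_mul fun u v => ?_
  rw [dist_eq, dist_eq, NNReal.coe_one, one_mul]
  gcongr with i
  exact abs_max_sub_max_le_abs _ _ _

end EuclideanSpace

namespace Matrix

variable {m n : Type*} [Fintype m] [Fintype n] [DecidableEq m]

noncomputable def vecMulCLM (M : Matrix m n ℝ) : EuclideanSpace ℝ m →L[ℝ] EuclideanSpace ℝ n :=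
  (toEuclideanLin ≪≫ₗ LinearMap.toContinuousLinearMap) Mᵀ

theorem vecMulCLM_apply (M : Matrix m n ℝ) (v : EuclideanSpace ℝ m) :
    M.vecMulCLM v = WithLp.toLp 2 (v.ofLp ᵥ* M) := by
  rw [vecMulCLM, LinearEquiv.trans_apply, LinearMap.coe_toContinuousLinearMap', toLpLin_apply,
    mulVec_transpose]

theorem vecMulCLM_add (M N : Matrix m n ℝ) : (M + N).vecMulCLM = M.vecMulCLM + N.vecMulCLM := by
  simp only [vecMulCLM, transpose_add, map_add]

theorem norm_vecMulCLM [DecidableEq n] (M : Matrix m n ℝ) : ‖M.vecMulCLM‖ = ‖M‖ := by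
  rw [← l2_opNorm_conjTranspose, conjTranspose_eq_transpose_of_trivial]
  rfl

end Matrix

open EuclideanSpace Matrix

theorem net2_eq_vecMulCLM_relu {n p q : ℕ} (W1 : Matrix (Fin n) (Fin p) ℝ)
    (W2 : Matrix (Fin p) (Fin q) ℝ) (x : EuclideanSpace ℝ (Fin n)) :
    net2 W1 W2 x = W2.vecMulCLM (relu (W1.vecMulCLM x)) := by
  simp only [net2, relu, vecMulCLM_apply]

theorem stmt14 {n p q : ℕ} (W1 U1 : Matrix (Fin n) (Fin p) ℝ)
    (W2 U2 : Matrix (Fin p) (Fin q) ℝ) (B : ℝ)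
    (x : EuclideanSpace ℝ (Fin n)) (hx : ‖x‖ ≤ B) :
    ‖net2 W1 W2 x - net2 (W1 + U1) (W2 + U2) x‖ ≤
      B * (‖U1‖ * (‖W2‖ + ‖U2‖) + ‖W1‖ * ‖U2‖) := by
  have h := norm_sub_perturbed_comp_le lipschitzWith_relu relu_zero
    W1.vecMulCLM U1.vecMulCLM W2.vecMulCLM U2.vecMulCLM x
  simp only [norm_vecMulCLM, ← vecMulCLM_add, ← net2_eq_vecMulCLM_relu] at h
  exact h.trans (by gcongr)
end
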